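/- arXiv:0910.1545 — 5 statements merged into one kernel-verified Lean document; each statement's English description precedes it below -/
import Mathlib

section
/- For every M > 0 and C > 4M there exists ε > 0 such that for all a with |a| < ε, all τ with |τ| = 1, and all Φ with |Φ| ≤ 4M, the polynomial r ↦ R_a(r,τ,Φ) has a unique root r_a(τ,Φ) in the interval (3M - C·|a|·K, 3M + C·|a|·K) for some constant K depending only on M, and this root is simple (the derivative in r is nonzero there). -/
/-!
At `a = 0` the polynomial is `τ² r⁴ (r - 3M)`, with a simple root at `3M`. For `|τ| = 1`,
`|Φ| ≤ 4M`, `|a| ≤ M/30` and `r ∈ [5M/2, 7M/2]`, `R_a` differs from `r⁴ (r - 3M)` by at most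
`128 M⁴ |a|`, and `∂ᵣR_a` differs from `5r⁴ - 12Mr³ ≥ (125/16) M⁴` by at most `64 M³ |a|`.
So `R_a` is strictly increasing there and changes sign on `[3M - δ, 3M + δ]` once
`8|a| ≤ δ ≤ M/2`; with `K = 2/M` the half-width `δ = C K |a|` satisfies this because `C > 4M`
and `|a| < M²/(4C)`.
-/

open Set

theorem exists_unique_zero_of_hasDerivAt_pos {f f' : ℝ → ℝ} {x y : ℝ} (hxy : x ≤ y)
    (hf : ∀ s ∈ Icc x y, HasDerivAt f (f' s) s) (hf' : ∀ s ∈ Icc x y, 0 < f' s)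
    (hx : f x ≤ 0) (hy : 0 ≤ f y) :
    ∃ r, (r ∈ Icc x y ∧ f r = 0 ∧ deriv f r ≠ 0) ∧ ∀ r' ∈ Icc x y, f r' = 0 → r' = r := by
  have hcont : ContinuousOn f (Icc x y) := fun s hs => (hf s hs).continuousAt.continuousWithinAt
  have hmono : StrictMonoOn f (Icc x y) :=
    strictMonoOn_of_deriv_pos (convex_Icc x y) hcont fun s hs => by
      have hs' := interior_subset hs
      rw [(hf s hs').deriv]
      exact hf' s hs'
  obtain ⟨r, hr, hfr⟩ := intermediate_value_Icc hxy hcont ⟨hx, hy⟩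
  refine ⟨r, ⟨hr, hfr, ?_⟩, fun r' hr' hfr' => hmono.injOn hr' hr (hfr'.trans hfr.symm)⟩
  rw [(hf r hr).deriv]
  exact (hf' r hr).ne'

def kerrR (M a τ Φ r : ℝ) : ℝ :=
  (r^2+a^2)*(r^3-3*M*r^2+a^2*r+a^2*M)*τ^2 - 2*a*M*(r^2-a^2)*τ*Φ - a^2*(r-M)*Φ^2

def kerrR' (M a τ Φ r : ℝ) : ℝ :=
  (2*r*(r^3-3*M*r^2+a^2*r+a^2*M) + (r^2+a^2)*(3*r^2-6*M*r+a^2))*τ^2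
    - 4*a*M*r*τ*Φ - a^2*Φ^2

theorem hasDerivAt_kerrR (M a τ Φ r : ℝ) : HasDerivAt (kerrR M a τ Φ) (kerrR' M a τ Φ r) r := by
  have hid := hasDerivAt_id r
  have := ((((hid.pow 2).add_const (a^2)).mul
      ((((hid.pow 3).sub ((hid.pow 2).const_mul (3*M))).add (hid.const_mul (a^2))).add_const
        (a^2*M))).mul_const (τ^2)).sub
    (((((hid.pow 2).sub_const (a^2)).const_mul (2*a*M)).mul_const τ).mul_const Φ) |>.sub
    (((hid.sub_const M).const_mul (a^2)).mul_const (Φ^2))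
  refine (this.congr_deriv ?_).congr_of_eventuallyEq (.of_forall fun s => ?_)
  · simp [kerrR']; ring
  · simp [kerrR]

section Estimates

variable {M a τ Φ r : ℝ}

theorem sq_le_abs_mul_of_abs_le {c : ℝ} (ha : |a| ≤ c) : a^2 ≤ |a| * c := by
  rw [← sq_abs, sq]; exact mul_le_mul_of_nonneg_left ha (abs_nonneg a)

theorem abs_mul_mul_le_of_abs_eq_one {c : ℝ} (hτ : |τ| = 1) (hΦ : |Φ| ≤ c) :
    |a*τ*Φ| ≤ c * |a| := by
  rw [abs_mul, abs_mul, hτ, mul_one, mul_comm]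
  exact mul_le_mul_of_nonneg_right hΦ (abs_nonneg a)

theorem kerrR_sub_eq (hτ : τ^2 = 1) :
    kerrR M a τ Φ r - r^4*(r-3*M) = 2*a^2*r^2*(r-M) + a^4*(r+M)
      - 2*M*(r^2-a^2)*(a*τ*Φ) - a^2*(r-M)*Φ^2 := by
  unfold kerrR; linear_combination ((r^2+a^2)*(r^3-3*M*r^2+a^2*r+a^2*M)) * hτ

theorem kerrR'_sub_eq (hτ : τ^2 = 1) :
    kerrR' M a τ Φ r - (5*r^4-12*M*r^3) = 2*a^2*r*(3*r-2*M) + a^4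
      - 4*M*r*(a*τ*Φ) - a^2*Φ^2 := by
  unfold kerrR'
  linear_combination (2*r*(r^3-3*M*r^2+a^2*r+a^2*M) + (r^2+a^2)*(3*r^2-6*M*r+a^2)) * hτ

theorem pow_four_le_abs_mul_of_abs_le {c : ℝ} (ha : |a| ≤ c) : a^4 ≤ |a| * c^3 := by
  rw [← Even.pow_abs (by decide), show |a|^4 = |a| * |a|^3 by ring]; gcongr

theorem abs_kerrR_sub_le (hM : 0 < M) (ha : |a| ≤ M/30) (hτ : |τ| = 1) (hΦ : |Φ| ≤ 4*M)
    (hr : r ∈ Icc (5*M/2) (7*M/2)) : |kerrR M a τ Φ r - r^4*(r-3*M)| ≤ 128*M^4*|a| := by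
  obtain ⟨hr₁, hr₂⟩ := hr
  have hrM : 0 ≤ r - M := by linarith
  have ha2 := sq_le_abs_mul_of_abs_le ha
  have hΦ2 : Φ^2 ≤ 16*M^2 := by nlinarith [sq_abs Φ, abs_nonneg Φ]
  have t1 : 2*a^2*r^2*(r-M) ≤ 3*M^4*|a| :=
    calc 2*a^2*r^2*(r-M) ≤ 2*(|a| * (M/30))*(7*M/2)^2*(7*M/2-M) := by gcongr; linarith
      _ ≤ 3*M^4*|a| := by nlinarith [abs_nonneg a, pow_pos hM 4]
  have t2 : a^4*(r+M) ≤ M^4*|a| :=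
    calc a^4*(r+M) ≤ (|a| * (M/30)^3)*(9*M/2) := by
          gcongr
          · linarith
          · exact pow_four_le_abs_mul_of_abs_le ha
          · linarith
      _ ≤ M^4*|a| := by nlinarith [abs_nonneg a, pow_pos hM 4]
  have t3 : |2*M*(r^2-a^2)*(a*τ*Φ)| ≤ 98*M^4*|a| := by
    have hra : 0 ≤ r^2-a^2 := by nlinarith [sq_abs a]
    rw [abs_mul, abs_of_nonneg (by positivity : 0 ≤ 2*M*(r^2-a^2))]
    calc 2*M*(r^2-a^2)*|a*τ*Φ| ≤ 2*M*(7*M/2)^2*(4*M*|a|) := by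
          gcongr
          · nlinarith [sq_nonneg a]
          · exact abs_mul_mul_le_of_abs_eq_one hτ hΦ
      _ = 98*M^4*|a| := by ring
  have t4 : a^2*(r-M)*Φ^2 ≤ 2*M^4*|a| :=
    calc a^2*(r-M)*Φ^2 ≤ (|a| * (M/30))*(5*M/2)*(16*M^2) := by gcongr; linarith
      _ ≤ 2*M^4*|a| := by nlinarith [abs_nonneg a, pow_pos hM 4]
  have p1 : 0 ≤ 2*a^2*r^2*(r-M) := mul_nonneg (by positivity) hrM
  have p2 : 0 ≤ a^4*(r+M) := mul_nonneg (by positivity) (by linarith)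
  have p4 : 0 ≤ a^2*(r-M)*Φ^2 := mul_nonneg (mul_nonneg (sq_nonneg a) hrM) (sq_nonneg Φ)
  rw [kerrR_sub_eq (by rw [← sq_abs, hτ, one_pow]), abs_le]
  constructor <;> linarith [abs_le.mp t3]

theorem abs_kerrR'_sub_le (hM : 0 < M) (ha : |a| ≤ M/30) (hτ : |τ| = 1) (hΦ : |Φ| ≤ 4*M)
    (hr : r ∈ Icc (5*M/2) (7*M/2)) : |kerrR' M a τ Φ r - (5*r^4-12*M*r^3)| ≤ 64*M^3*|a| := by
  obtain ⟨hr₁, hr₂⟩ := hr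
  have ha2 := sq_le_abs_mul_of_abs_le ha
  have hΦ2 : Φ^2 ≤ 16*M^2 := by nlinarith [sq_abs Φ, abs_nonneg Φ]
  have hM3a : 0 ≤ M^3*|a| := by positivity
  have t1 : 2*a^2*r*(3*r-2*M) ≤ 3*M^3*|a| :=
    calc 2*a^2*r*(3*r-2*M) ≤ 2*(|a| * (M/30))*(7*M/2)*(3*(7*M/2)-2*M) := by
          gcongr <;> linarith
      _ ≤ 3*M^3*|a| := by linarith
  have t2 : a^4 ≤ M^3*|a| :=
    calc a^4 ≤ |a| * (M/30)^3 := pow_four_le_abs_mul_of_abs_le ha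
      _ ≤ M^3*|a| := by linarith
  have t3 : |4*M*r*(a*τ*Φ)| ≤ 56*M^3*|a| := by
    rw [abs_mul, abs_of_nonneg (by nlinarith : 0 ≤ 4*M*r)]
    calc 4*M*r*|a*τ*Φ| ≤ 4*M*(7*M/2)*(4*M*|a|) := by
          gcongr
          exact abs_mul_mul_le_of_abs_eq_one hτ hΦ
      _ = 56*M^3*|a| := by ring
  have t4 : a^2*Φ^2 ≤ M^3*|a| :=
    calc a^2*Φ^2 ≤ (|a| * (M/30))*(16*M^2) := by gcongr
      _ ≤ M^3*|a| := by linarith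
  have p1 : 0 ≤ 2*a^2*r*(3*r-2*M) := mul_nonneg (by nlinarith) (by linarith)
  rw [kerrR'_sub_eq (by rw [← sq_abs, hτ, one_pow]), abs_le]
  constructor <;>
    linarith [abs_le.mp t3, pow_nonneg (sq_nonneg a) 2, mul_nonneg (sq_nonneg a) (sq_nonneg Φ)]

theorem kerrR'_pos (hM : 0 < M) (ha : |a| ≤ M/30) (hτ : |τ| = 1) (hΦ : |Φ| ≤ 4*M)
    (hr : r ∈ Icc (5*M/2) (7*M/2)) : 0 < kerrR' M a τ Φ r := by
  obtain ⟨hr₁, hr₂⟩ := hr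
  have hmain : (5*M/2)^3*(M/2) ≤ 5*r^4-12*M*r^3 :=
    calc (5*M/2)^3*(M/2) ≤ r^3*(5*r-12*M) :=
          mul_le_mul (pow_le_pow_left₀ (by positivity) hr₁ 3) (by linarith) (by positivity)
            (pow_nonneg (by linarith) 3)
      _ = 5*r^4-12*M*r^3 := by ring
  have hpert := (abs_le.mp (abs_kerrR'_sub_le hM ha hτ hΦ ⟨hr₁, hr₂⟩)).1
  nlinarith [mul_le_mul_of_nonneg_left ha (pow_pos hM 3).le, pow_pos hM 4]

theorem kerrR_nonpos_left {δ : ℝ} (hM : 0 < M) (ha : |a| ≤ M/30) (hτ : |τ| = 1)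
    (hΦ : |Φ| ≤ 4*M) (hδa : 8*|a| ≤ δ) (hδM : δ ≤ M/2) : kerrR M a τ Φ (3*M-δ) ≤ 0 := by
  have hδ : 0 ≤ δ := by linarith [abs_nonneg a]
  have hpert :=
    (abs_le.mp (abs_kerrR_sub_le (r := 3*M-δ) hM ha hτ hΦ ⟨by linarith, by linarith⟩)).2
  have hpow : (5*M/2)^4 ≤ (3*M-δ)^4 := pow_le_pow_left₀ (by positivity) (by linarith) 4
  nlinarith [mul_le_mul_of_nonneg_right hpow hδ, mul_le_mul_of_nonneg_left hδa (pow_pos hM 4).le,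
    mul_nonneg (pow_pos hM 4).le hδ]

theorem kerrR_nonneg_right {δ : ℝ} (hM : 0 < M) (ha : |a| ≤ M/30) (hτ : |τ| = 1)
    (hΦ : |Φ| ≤ 4*M) (hδa : 8*|a| ≤ δ) (hδM : δ ≤ M/2) : 0 ≤ kerrR M a τ Φ (3*M+δ) := by
  have hδ : 0 ≤ δ := by linarith [abs_nonneg a]
  have hpert :=
    (abs_le.mp (abs_kerrR_sub_le (r := 3*M+δ) hM ha hτ hΦ ⟨by linarith, by linarith⟩)).1
  have hpow : (3*M)^4 ≤ (3*M+δ)^4 := pow_le_pow_left₀ (by positivity) (by linarith) 4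
  nlinarith [mul_le_mul_of_nonneg_right hpow hδ, mul_le_mul_of_nonneg_left hδa (pow_pos hM 4).le,
    mul_nonneg (pow_pos hM 4).le hδ]

end Estimates

/-- Persistence of the simple root `r = 3M` of `R_a(·,τ,Φ)` for small `a`,
uniformly in `|τ| = 1`, `|Φ| ≤ 4M`. -/
theorem kerr_trapped_root (M C : ℝ) (hM : 0 < M) (hC : 4*M < C) :
    ∃ K > (0:ℝ), ∃ ε > (0:ℝ), ∀ a τ Φ : ℝ, abs a < ε → |τ| = 1 → |Φ| ≤ 4*M →
      ∃ r : ℝ,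
        (r ∈ Set.Icc (3*M - C*abs a*K) (3*M + C*abs a*K) ∧
          (r^2+a^2)*(r^3-3*M*r^2+a^2*r+a^2*M)*τ^2
            - 2*a*M*(r^2-a^2)*τ*Φ - a^2*(r-M)*Φ^2 = 0 ∧
          deriv (fun s : ℝ => (s^2+a^2)*(s^3-3*M*s^2+a^2*s+a^2*M)*τ^2
            - 2*a*M*(s^2-a^2)*τ*Φ - a^2*(s-M)*Φ^2) r ≠ 0) ∧
        ∀ r' : ℝ, r' ∈ Set.Icc (3*M - C*abs a*K) (3*M + C*abs a*K) →
          (r'^2+a^2)*(r'^3-3*M*r'^2+a^2*r'+a^2*M)*τ^2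
            - 2*a*M*(r'^2-a^2)*τ*Φ - a^2*(r'-M)*Φ^2 = 0 → r' = r := by
  have hC0 : 0 < C := by linarith
  refine ⟨2/M, by positivity, min (M/30) (M^2/(4*C)), by positivity, fun a τ Φ ha hτ hΦ => ?_⟩
  have ha₁ : |a| ≤ M/30 := ha.le.trans (min_le_left _ _)
  have ha₂ : |a| ≤ M^2/(4*C) := ha.le.trans (min_le_right _ _)
  have hδa : 8*|a| ≤ C*|a| * (2/M) :=
    calc 8*|a| = 4*M*|a| * (2/M) := by field_simp; ring
      _ ≤ C*|a| * (2/M) := by gcongr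
  have hδM : C*|a| * (2/M) ≤ M/2 :=
    calc C*|a| * (2/M) ≤ C * (M^2/(4*C)) * (2/M) := by gcongr
      _ = M/2 := by field_simp; ring
  exact exists_unique_zero_of_hasDerivAt_pos (by linarith [abs_nonneg a])
    (fun s _ => hasDerivAt_kerrR M a τ Φ s)
    (fun s hs => kerrR'_pos hM ha₁ hτ hΦ ⟨by linarith [hs.1], by linarith [hs.2]⟩)
    (kerrR_nonpos_left hM ha₁ hτ hΦ hδa hδM) (kerrR_nonneg_right hM ha₁ hτ hΦ hδa hδM)
end

section
/- Let V : [r₁,r₂] → ℝ be continuous with c ≤ V(r) ≤ C for constants 0 < c ≤ C, and let Δ : [r₁,r₂] → ℝ be continuous with c ≤ Δ(r) ≤ C. Suppose w ∈ C²([r₁,r₂]) solves Δ(r)w''(r) + V(r)w(r) = g(r) with w(r₁) = w'(r₁) = 0. Then there is a constant K depending only on c, C, r₂ - r₁ such that for all r ∈ [r₁,r₂]: |w(r)| + |w'(r)| ≤ K·‖g‖_{L²([r₁,r₂])}. -/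
/-!
Since `Δ` is only continuous, the energy is `E = w² + w'²` rather than `Δ w'² + w²`. Solving the
equation for `w''` gives `E' ≤ (2 + C/c) E + g²/c²`, so the damped energy `e^{-(2 + C/c)(r - r₁)} E`
grows at most like `∫ g²/c²`; with `E(r₁) = 0` this bounds `E` on `[r₁, r₂]` by
`e^{(2 + C/c) L} ‖g‖²/c²`.
-/

open Set Real MeasureTheory intervalIntegral

theorem le_exp_mul_add_integral_of_hasDerivAt_le {E E' G : ℝ → ℝ} {a b K : ℝ} (hab : a ≤ b)
    (hK : 0 ≤ K) (hE : ∀ s ∈ Icc a b, HasDerivAt E (E' s) s) (hG : IntegrableOn G (Icc a b))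
    (hG_nonneg : ∀ s ∈ Ioo a b, 0 ≤ G s) (hE' : ∀ s ∈ Ioo a b, E' s ≤ K * E s + G s) :
    E b ≤ exp (K * (b - a)) * (E a + ∫ s in a..b, G s) := by
  set damping : ℝ → ℝ := fun s => exp (-K * (s - a))
  have hdamping : ∀ s, HasDerivAt damping (damping s * -K) s := fun s =>
    (((hasDerivAt_id s).sub_const a).const_mul (-K)).exp.congr_deriv (by simp [damping])
  have hF : ∀ s ∈ Icc a b,
      HasDerivAt (fun s => damping s * E s) (damping s * (E' s - K * E s)) s := fun s hs =>
    ((hdamping s).mul (hE s hs)).congr_deriv (by ring)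
  have hF_le : damping b * E b - damping a * E a ≤ ∫ s in a..b, G s := by
    refine sub_le_integral_of_hasDeriv_right_of_le hab
      (fun s hs => (hF s hs).continuousAt.continuousWithinAt)
      (fun s hs => (hF s (Ioo_subset_Icc_self hs)).hasDerivWithinAt) hG fun s hs => ?_
    have hdamping_le : damping s ≤ 1 := exp_le_one_iff.mpr (by nlinarith [hs.1])
    calc damping s * (E' s - K * E s) ≤ damping s * G s :=
          mul_le_mul_of_nonneg_left (by linarith [hE' s hs]) (exp_pos _).le
      _ ≤ G s := mul_le_of_le_one_left (hG_nonneg s hs) hdamping_le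
  have hdamping_mul : exp (K * (b - a)) * damping b = 1 := by
    rw [← exp_add, ← exp_zero]; ring_nf
  have hdamping_a : damping a = 1 := by simp [damping]
  calc E b = exp (K * (b - a)) * (damping b * E b) := by rw [← mul_assoc, hdamping_mul, one_mul]
    _ ≤ exp (K * (b - a)) * (E a + ∫ s in a..b, G s) := by
        gcongr
        rw [hdamping_a, one_mul] at hF_le
        linarith

theorem sq_add_sq_deriv_le_of_mul_add_mul_eq {Δ V w w' w'' g c C : ℝ} (hc : 0 < c) (hΔ : c ≤ Δ)
    (hV : |V| ≤ C) (hode : Δ * w'' + V * w = g) :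
    2 * w * w' + 2 * w' * w'' ≤ (2 + C / c) * (w ^ 2 + w' ^ 2) + g ^ 2 / c ^ 2 := by
  have hw'' : |w''| ≤ |g| / c + C / c * |w| := by
    rw [div_mul_eq_mul_div, ← add_div, le_div_iff₀ hc]
    calc |w''| * c ≤ |w''| * Δ := by gcongr
      _ = |g - V * w| := by
          rw [← hode, add_sub_cancel_right, abs_mul, abs_of_pos (hc.trans_le hΔ), mul_comm]
      _ ≤ |g| + |V| * |w| := by rw [← abs_mul]; exact abs_sub _ _
      _ ≤ |g| + C * |w| := by gcongr
  have hCc : 0 ≤ C / c := div_nonneg ((abs_nonneg V).trans hV) hc.le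
  have hg : g ^ 2 / c ^ 2 = (|g| / c) ^ 2 := by rw [div_pow, sq_abs]
  calc 2 * w * w' + 2 * w' * w'' ≤ (w ^ 2 + w' ^ 2) + 2 * |w'| * |w''| := by
        rw [mul_assoc 2 |w'|, ← abs_mul]
        linarith [two_mul_le_add_sq w w', le_abs_self (w' * w'')]
    _ ≤ (w ^ 2 + w' ^ 2) + 2 * |w'| * (|g| / c + C / c * |w|) := by gcongr
    _ ≤ (2 + C / c) * (w ^ 2 + w' ^ 2) + g ^ 2 / c ^ 2 := by
        rw [hg, ← sq_abs w, ← sq_abs w']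
        nlinarith [two_mul_le_add_sq |w'| (|g| / c),
          mul_le_mul_of_nonneg_left (two_mul_le_add_sq |w'| |w|) hCc]

theorem abs_add_abs_le_two_mul_of_sq_add_sq_le {x y M : ℝ} (hM : 0 ≤ M)
    (h : x ^ 2 + y ^ 2 ≤ M ^ 2) : |x| + |y| ≤ 2 * M := by
  have hx := abs_le_of_sq_le_sq (by nlinarith [sq_nonneg y]) hM
  have hy := abs_le_of_sq_le_sq (by nlinarith [sq_nonneg x]) hM
  linarith

theorem sq_add_sq_le_exp_mul_of_mul_add_mul_eq {Δ V w w' w'' g : ℝ → ℝ} {a b c C : ℝ}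
    (hab : a ≤ b) (hc : 0 < c) (hΔ : ∀ s ∈ Icc a b, c ≤ Δ s) (hV : ∀ s ∈ Icc a b, |V s| ≤ C)
    (hw : ∀ s ∈ Icc a b, HasDerivAt w (w' s) s) (hw' : ∀ s ∈ Icc a b, HasDerivAt w' (w'' s) s)
    (hg : ContinuousOn g (Icc a b)) (hode : ∀ s ∈ Icc a b, Δ s * w'' s + V s * w s = g s) :
    w b ^ 2 + w' b ^ 2 ≤
      exp ((2 + C / c) * (b - a)) * (w a ^ 2 + w' a ^ 2 + ∫ s in a..b, g s ^ 2 / c ^ 2) := by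
  have hC : 0 ≤ C := (abs_nonneg _).trans (hV a (left_mem_Icc.mpr hab))
  refine le_exp_mul_add_integral_of_hasDerivAt_le (E := fun s => w s ^ 2 + w' s ^ 2)
    (E' := fun s => 2 * w s * w' s + 2 * w' s * w'' s) hab (by positivity)
    (fun s hs => ((hw s hs).pow 2).add ((hw' s hs).pow 2) |>.congr_deriv (by push_cast; ring))
    ((hg.pow 2).div_const _).integrableOn_Icc (fun s _ => by positivity) fun s hs => ?_
  have hs' := Ioo_subset_Icc_self hs
  exact sq_add_sq_deriv_le_of_mul_add_mul_eq hc (hΔ s hs') (hV s hs') (hode s hs')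

theorem ode_bounded_potential_estimate_general (c C L : ℝ) (hc : 0 < c) (hcC : c ≤ C) :
    ∃ K > (0:ℝ), ∀ r₁ r₂ : ℝ, r₂ - r₁ = L →
      ∀ V Δ w w' w'' g : ℝ → ℝ,
      ContinuousOn V (Set.Icc r₁ r₂) →
      (∀ r ∈ Set.Icc r₁ r₂, c ≤ V r ∧ V r ≤ C) →
      ContinuousOn Δ (Set.Icc r₁ r₂) →
      (∀ r ∈ Set.Icc r₁ r₂, c ≤ Δ r ∧ Δ r ≤ C) →
      (∀ r ∈ Set.Icc r₁ r₂, HasDerivAt w (w' r) r) →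
      (∀ r ∈ Set.Icc r₁ r₂, HasDerivAt w' (w'' r) r) →
      ContinuousOn w'' (Set.Icc r₁ r₂) →
      ContinuousOn g (Set.Icc r₁ r₂) →
      (∀ r ∈ Set.Icc r₁ r₂, Δ r * w'' r + V r * w r = g r) →
      w r₁ = 0 → w' r₁ = 0 →
      ∀ r ∈ Set.Icc r₁ r₂,
        |w r| + |w' r| ≤ K * Real.sqrt (∫ s in r₁..r₂, (g s)^2) := by
  set A := 2 + C / c
  refine ⟨2 * (exp (A * L / 2) / c), by positivity, ?_⟩
  intro r₁ r₂ hL V Δ w w' w'' g _ hV _ hΔ hw hw' _ hg hode hw₀ hw'₀ r hr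
  have hsub : Icc r₁ r ⊆ Icc r₁ r₂ := Icc_subset_Icc_right hr.2
  have henergy := sq_add_sq_le_exp_mul_of_mul_add_mul_eq hr.1 hc
    (fun s hs => (hΔ s (hsub hs)).1)
    (fun s hs => abs_le.mpr ⟨by linarith [hV s (hsub hs)], (hV s (hsub hs)).2⟩)
    (fun s hs => hw s (hsub hs)) (fun s hs => hw' s (hsub hs)) (hg.mono hsub)
    (fun s hs => hode s (hsub hs))
  rw [hw₀, hw'₀, zero_pow two_ne_zero, add_zero, zero_add] at henergy
  have hintegral : ∫ s in r₁..r, g s ^ 2 / c ^ 2 ≤ (∫ s in r₁..r₂, g s ^ 2) / c ^ 2 := by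
    rw [← intervalIntegral.integral_div]
    exact integral_mono_interval le_rfl hr.1 hr.2 (ae_of_all _ fun s => by positivity)
      (((hg.pow 2).div_const _).intervalIntegrable_of_Icc (hr.1.trans hr.2))
  have hexp : exp (A * (r - r₁)) ≤ exp (A * L) := by
    have : 0 ≤ C / c := div_nonneg (hc.le.trans hcC) hc.le
    gcongr
    linarith [hr.2]
  have hsq : (exp (A * L / 2) / c * √(∫ s in r₁..r₂, g s ^ 2)) ^ 2
      = exp (A * L) * ((∫ s in r₁..r₂, g s ^ 2) / c ^ 2) := by
    rw [mul_pow, div_pow, sq_sqrt (integral_nonneg (hr.1.trans hr.2) fun s _ => sq_nonneg _),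
      sq, ← exp_add, add_halves]
    ring
  calc |w r| + |w' r| ≤ 2 * (exp (A * L / 2) / c * √(∫ s in r₁..r₂, g s ^ 2)) := by
        refine abs_add_abs_le_two_mul_of_sq_add_sq_le (by positivity) ?_
        rw [hsq]
        exact henergy.trans (mul_le_mul hexp hintegral
          (integral_nonneg hr.1 fun s _ => by positivity) (exp_pos _).le)
    _ = 2 * (exp (A * L / 2) / c) * √(∫ s in r₁..r₂, g s ^ 2) := by ring

/-- Case 1 (bounded potential) energy estimate: if `Δ w'' + V w = g` on
`[r₁,r₂]` with `c ≤ V, Δ ≤ C` and vanishing Cauchy data at `r₁`, then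
`|w| + |w'| ≤ K ‖g‖_{L²}` with `K = K(c, C, r₂ - r₁)`. -/
theorem ode_bounded_potential_estimate (c C L : ℝ) (hc : 0 < c) (hcC : c ≤ C)
    (hL : 0 < L) :
    ∃ K > (0:ℝ), ∀ r₁ r₂ : ℝ, r₂ - r₁ = L →
      ∀ V Δ w w' w'' g : ℝ → ℝ,
      ContinuousOn V (Set.Icc r₁ r₂) →
      (∀ r ∈ Set.Icc r₁ r₂, c ≤ V r ∧ V r ≤ C) →
      ContinuousOn Δ (Set.Icc r₁ r₂) →
      (∀ r ∈ Set.Icc r₁ r₂, c ≤ Δ r ∧ Δ r ≤ C) →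
      (∀ r ∈ Set.Icc r₁ r₂, HasDerivAt w (w' r) r) →
      (∀ r ∈ Set.Icc r₁ r₂, HasDerivAt w' (w'' r) r) →
      ContinuousOn w'' (Set.Icc r₁ r₂) →
      ContinuousOn g (Set.Icc r₁ r₂) →
      (∀ r ∈ Set.Icc r₁ r₂, Δ r * w'' r + V r * w r = g r) →
      w r₁ = 0 → w' r₁ = 0 →
      ∀ r ∈ Set.Icc r₁ r₂,
        |w r| + |w' r| ≤ K * Real.sqrt (∫ s in r₁..r₂, (g s)^2) :=
  ode_bounded_potential_estimate_general c C L hc hcC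
end

section
/- Let τ ≥ 1 and let V : [r₁,r₂] → ℝ be C¹ with V(r) ≥ cτ² and |V'(r)| ≤ Cτ² for constants 0 < c ≤ C. Let Δ : [r₁,r₂] → ℝ be C¹ with c ≤ Δ ≤ C and |Δ'| ≤ C. If w ∈ C² solves Δ(r)w''(r) + V(r)w(r) = g(r) with w(r₁) = w'(r₁) = 0, then there is K = K(c,C,r₂-r₁), independent of τ, such that τ|w(r)| + |w'(r)| ≤ K‖g‖_{L²([r₁,r₂])} for all r ∈ [r₁,r₂]. -/
/-!
The energy `E = Δ w'^2 + V w^2` vanishes at `r₁` and dominates `c (w'^2 + τ^2 w^2)`. By the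
equation its derivative is `Δ' w'^2 + V' w^2 + 2 w' g`, which is at most `(C + 1) / c * E + g^2`
because the factor `τ^2` in `|V'| ≤ C τ^2` is absorbed by `V ≥ c τ^2`. Gronwall then bounds `E`
by `exp ((C + 1) L / c) ‖g‖²_{L²}`, uniformly in `τ`.
-/

open Real Set Filter intervalIntegral MeasureTheory

theorem le_exp_mul_add_integral_of_hasDerivAt_le_s8 {E E' h : ℝ → ℝ} {a b A : ℝ} (hA : 0 ≤ A)
    (hE : ContinuousOn E (Icc a b)) (hE' : ∀ t ∈ Ioo a b, HasDerivAt E (E' t) t)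
    (hbound : ∀ t ∈ Ioo a b, E' t ≤ A * E t + h t)
    (hh : IntegrableOn h (Icc a b)) (hh0 : ∀ t ∈ Ioo a b, 0 ≤ h t) {x : ℝ} (hx : x ∈ Icc a b) :
    E x ≤ exp (A * (x - a)) * (E a + ∫ t in a..x, h t) := by
  set F : ℝ → ℝ := fun t => exp (-(A * (t - a))) * E t
  have hF : ContinuousOn F (Icc a x) :=
    ((by fun_prop : Continuous fun t => exp (-(A * (t - a)))).continuousOn.mul hE).mono
      (Icc_subset_Icc_right hx.2)
  have hF' : ∀ t ∈ Ioo a b, HasDerivAt F (exp (-(A * (t - a))) * (E' t - A * E t)) t := by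
    intro t ht
    have hexp : HasDerivAt (fun t => exp (-(A * (t - a)))) (exp (-(A * (t - a))) * -A) t := by
      simpa using (((hasDerivAt_id t).sub_const a).const_mul A).neg.exp
    exact (hexp.mul (hE' t ht)).congr_deriv (by ring)
  -- the integrating factor `exp (-A (t - a))` absorbs the linear term and is at most `1`
  have hF'_le : ∀ t ∈ Ioo a x, exp (-(A * (t - a))) * (E' t - A * E t) ≤ h t := by
    intro t ht
    have ht' : t ∈ Ioo a b := ⟨ht.1, ht.2.trans_le hx.2⟩
    calc exp (-(A * (t - a))) * (E' t - A * E t) ≤ exp (-(A * (t - a))) * h t :=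
          mul_le_mul_of_nonneg_left (by linarith [hbound t ht']) (exp_pos _).le
      _ ≤ h t := mul_le_of_le_one_left (hh0 t ht')
          (exp_le_one_iff.2 (neg_nonpos.2 (mul_nonneg hA (sub_nonneg.2 ht.1.le))))
  have hFx : F x - F a ≤ ∫ t in a..x, h t :=
    sub_le_integral_of_hasDeriv_right_of_le hx.1 hF
      (fun t ht => (hF' t ⟨ht.1, ht.2.trans_le hx.2⟩).hasDerivWithinAt)
      (hh.mono_set (Icc_subset_Icc_right hx.2)) hF'_le
  have hEx : E x = exp (A * (x - a)) * F x := by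
    simp only [F, ← mul_assoc, ← exp_add, add_neg_cancel, exp_zero, one_mul]
  have hFa : F a = E a := by simp [F]
  rw [hEx]
  gcongr
  linarith

theorem le_exp_mul_add_integral_interval_of_hasDerivAt_le {E E' h : ℝ → ℝ} {a b A : ℝ}
    (hA : 0 ≤ A) (hE : ContinuousOn E (Icc a b)) (hE' : ∀ t ∈ Ioo a b, HasDerivAt E (E' t) t)
    (hbound : ∀ t ∈ Ioo a b, E' t ≤ A * E t + h t) (hh : IntegrableOn h (Icc a b))
    (hh0 : ∀ t ∈ Icc a b, 0 ≤ h t) (hEa : 0 ≤ E a) {x : ℝ} (hx : x ∈ Icc a b) :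
    E x ≤ exp (A * (b - a)) * (E a + ∫ t in a..b, h t) := by
  have hab : a ≤ b := hx.1.trans hx.2
  have hint_mono : ∫ t in a..x, h t ≤ ∫ t in a..b, h t :=
    integral_mono_interval le_rfl hx.1 hx.2
      ((ae_restrict_iff' measurableSet_Ioc).2 (Eventually.of_forall fun t ht =>
        hh0 t (Ioc_subset_Icc_self ht)))
      ((intervalIntegrable_iff_integrableOn_Icc_of_le hab).2 hh)
  calc E x ≤ exp (A * (x - a)) * (E a + ∫ t in a..x, h t) :=
        le_exp_mul_add_integral_of_hasDerivAt_le_s8 hA hE hE' hbound hh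
          (fun t ht => hh0 t (Ioo_subset_Icc_self ht)) hx
    _ ≤ exp (A * (b - a)) * (E a + ∫ t in a..b, h t) := by
        have : 0 ≤ ∫ t in a..x, h t :=
          integral_nonneg hx.1 fun t ht => hh0 t ⟨ht.1, ht.2.trans hx.2⟩
        gcongr
        exact hx.2

def energy (Δ V w w' : ℝ → ℝ) (r : ℝ) : ℝ := Δ r * w' r ^ 2 + V r * w r ^ 2

theorem hasDerivAt_energy {Δ Δ' V V' w w' w'' : ℝ → ℝ} {r : ℝ}
    (hΔ : HasDerivAt Δ (Δ' r) r) (hV : HasDerivAt V (V' r) r)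
    (hw : HasDerivAt w (w' r) r) (hw' : HasDerivAt w' (w'' r) r) :
    HasDerivAt (energy Δ V w w')
      (Δ' r * w' r ^ 2 + V' r * w r ^ 2 + 2 * w' r * (Δ r * w'' r + V r * w r)) r :=
  ((hΔ.mul (hw'.fun_pow 2)).add (hV.mul (hw.fun_pow 2))).congr_deriv (by ring)

theorem energy_deriv_le {c C τ d d' v v' p q g : ℝ} (hc : 0 < c) (hd : c ≤ d) (hd' : |d'| ≤ C)
    (hv : c * τ ^ 2 ≤ v) (hv' : |v'| ≤ C * τ ^ 2) :
    d' * q ^ 2 + v' * p ^ 2 + 2 * q * g ≤ (C + 1) / c * (d * q ^ 2 + v * p ^ 2) + g ^ 2 := by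
  have hC : 0 ≤ C := (abs_nonneg _).trans hd'
  have hdq : (C + 1) * q ^ 2 ≤ (C + 1) / c * (d * q ^ 2) := by
    rw [div_mul_eq_mul_div, le_div_iff₀ hc]
    nlinarith [mul_le_mul_of_nonneg_left hd (mul_nonneg (by linarith : 0 ≤ C + 1) (sq_nonneg q))]
  have hvp : C * τ ^ 2 * p ^ 2 ≤ (C + 1) / c * (v * p ^ 2) := by
    rw [div_mul_eq_mul_div, le_div_iff₀ hc]
    nlinarith [mul_le_mul_of_nonneg_left hv (mul_nonneg (by linarith : 0 ≤ C + 1) (sq_nonneg p)),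
      mul_nonneg (sq_nonneg τ) (sq_nonneg p)]
  nlinarith [mul_le_mul_of_nonneg_right (abs_le.1 hd').2 (sq_nonneg q),
    mul_le_mul_of_nonneg_right (abs_le.1 hv').2 (sq_nonneg p), sq_nonneg (q - g)]

theorem mul_abs_add_abs_le_sqrt_energy {c τ d v p q : ℝ} (hc : 0 < c) (hd : c ≤ d)
    (hv : c * τ ^ 2 ≤ v) : τ * |p| + |q| ≤ √(2 * (d * q ^ 2 + v * p ^ 2) / c) := by
  have hweighted : c * (τ ^ 2 * p ^ 2 + q ^ 2) ≤ d * q ^ 2 + v * p ^ 2 := by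
    nlinarith [mul_le_mul_of_nonneg_right hd (sq_nonneg q),
      mul_le_mul_of_nonneg_right hv (sq_nonneg p)]
  have hsq : (τ * |p| + |q|) ^ 2 ≤ 2 * (τ ^ 2 * p ^ 2 + q ^ 2) := by
    nlinarith [sq_nonneg (τ * |p| - |q|), sq_abs p, sq_abs q]
  apply le_sqrt_of_sq_le
  rw [le_div_iff₀ hc]
  nlinarith

theorem ode_hyperbolic_estimate_general (c C L : ℝ) (hc : 0 < c) :
    ∃ K > (0:ℝ), ∀ τ : ℝ, 1 ≤ τ → ∀ r₁ r₂ : ℝ, r₂ - r₁ = L →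
      ∀ V V' Δ Δ' w w' w'' g : ℝ → ℝ,
      (∀ r ∈ Set.Icc r₁ r₂, HasDerivAt V (V' r) r) →
      (∀ r ∈ Set.Icc r₁ r₂, c * τ^2 ≤ V r ∧ |V' r| ≤ C * τ^2) →
      (∀ r ∈ Set.Icc r₁ r₂, HasDerivAt Δ (Δ' r) r) →
      (∀ r ∈ Set.Icc r₁ r₂, c ≤ Δ r ∧ Δ r ≤ C ∧ |Δ' r| ≤ C) →
      (∀ r ∈ Set.Icc r₁ r₂, HasDerivAt w (w' r) r) →
      (∀ r ∈ Set.Icc r₁ r₂, HasDerivAt w' (w'' r) r) →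
      ContinuousOn w'' (Set.Icc r₁ r₂) →
      ContinuousOn g (Set.Icc r₁ r₂) →
      (∀ r ∈ Set.Icc r₁ r₂, Δ r * w'' r + V r * w r = g r) →
      w r₁ = 0 → w' r₁ = 0 →
      ∀ r ∈ Set.Icc r₁ r₂,
        τ * |w r| + |w' r| ≤ K * Real.sqrt (∫ s in r₁..r₂, (g s)^2) := by
  set A := (C + 1) / c
  refine ⟨√(2 * exp (A * L) / c), by positivity, ?_⟩
  intro τ _ r₁ r₂ hL V V' Δ Δ' w w' w'' g hV hVb hΔ hΔb hw hw' _ hg hode hw0 hw'0 r hr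
  have hA : 0 ≤ A := div_nonneg (by linarith [(abs_nonneg _).trans (hΔb r hr).2.2]) hc.le
  have hE' : ∀ x ∈ Icc r₁ r₂, HasDerivAt (energy Δ V w w')
      (Δ' x * w' x ^ 2 + V' x * w x ^ 2 + 2 * w' x * g x) x := fun x hx => by
    simpa only [hode x hx] using hasDerivAt_energy (hΔ x hx) (hV x hx) (hw x hx) (hw' x hx)
  have hE'_le : ∀ x ∈ Ioo r₁ r₂, Δ' x * w' x ^ 2 + V' x * w x ^ 2 + 2 * w' x * g x ≤
      A * energy Δ V w w' x + g x ^ 2 := fun x hx =>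
    energy_deriv_le hc (hΔb x (Ioo_subset_Icc_self hx)).1 (hΔb x (Ioo_subset_Icc_self hx)).2.2
      (hVb x (Ioo_subset_Icc_self hx)).1 (hVb x (Ioo_subset_Icc_self hx)).2
  have hEr : energy Δ V w w' r ≤ exp (A * L) * ∫ s in r₁..r₂, g s ^ 2 := by
    have hE0 : energy Δ V w w' r₁ = 0 := by simp [energy, hw0, hw'0]
    simpa [hE0, hL] using le_exp_mul_add_integral_interval_of_hasDerivAt_le hA
      (fun x hx => (hE' x hx).continuousAt.continuousWithinAt)
      (fun x hx => hE' x (Ioo_subset_Icc_self hx)) hE'_le (hg.pow 2).integrableOn_Icc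
      (fun _ _ => sq_nonneg _) hE0.ge hr
  calc τ * |w r| + |w' r| ≤ √(2 * energy Δ V w w' r / c) :=
        mul_abs_add_abs_le_sqrt_energy hc (hΔb r hr).1 (hVb r hr).1
    _ ≤ √(2 * (exp (A * L) * ∫ s in r₁..r₂, g s ^ 2) / c) := by gcongr
    _ = √(2 * exp (A * L) / c) * √(∫ s in r₁..r₂, g s ^ 2) := by
        rw [← sqrt_mul (by positivity)]
        ring_nf

/-- Case 2 (hyperbolic) energy estimate: if `Δ w'' + V w = g` with
`V ≈ τ²`, `|V'| ≲ τ²`, and vanishing Cauchy data at `r₁`, then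
`τ|w| + |w'| ≤ K ‖g‖_{L²}` uniformly in `τ ≥ 1`. -/
theorem ode_hyperbolic_estimate (c C L : ℝ) (hc : 0 < c) (hcC : c ≤ C)
    (hL : 0 < L) :
    ∃ K > (0:ℝ), ∀ τ : ℝ, 1 ≤ τ → ∀ r₁ r₂ : ℝ, r₂ - r₁ = L →
      ∀ V V' Δ Δ' w w' w'' g : ℝ → ℝ,
      (∀ r ∈ Set.Icc r₁ r₂, HasDerivAt V (V' r) r) →
      (∀ r ∈ Set.Icc r₁ r₂, c * τ^2 ≤ V r ∧ |V' r| ≤ C * τ^2) →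
      (∀ r ∈ Set.Icc r₁ r₂, HasDerivAt Δ (Δ' r) r) →
      (∀ r ∈ Set.Icc r₁ r₂, c ≤ Δ r ∧ Δ r ≤ C ∧ |Δ' r| ≤ C) →
      (∀ r ∈ Set.Icc r₁ r₂, HasDerivAt w (w' r) r) →
      (∀ r ∈ Set.Icc r₁ r₂, HasDerivAt w' (w'' r) r) →
      ContinuousOn w'' (Set.Icc r₁ r₂) →
      ContinuousOn g (Set.Icc r₁ r₂) →
      (∀ r ∈ Set.Icc r₁ r₂, Δ r * w'' r + V r * w r = g r) →
      w r₁ = 0 → w' r₁ = 0 →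
      ∀ r ∈ Set.Icc r₁ r₂,
        τ * |w r| + |w' r| ≤ K * Real.sqrt (∫ s in r₁..r₂, (g s)^2) :=
  ode_hyperbolic_estimate_general c C L hc
end

section
/- Let λ ≥ 1 and V : [r₁,r₂] → ℝ continuous with V(r) ≤ -cλ² for a constant c > 0, and Δ continuous with c ≤ Δ ≤ C. If w ∈ C²([r₁,r₂]) solves Δ(r)w''(r) + V(r)w(r) = g(r) with Dirichlet boundary conditions w(r₁) = w(r₂) = 0, then λ²‖w‖_{L²} + λ‖w'‖_{L²} ≤ K‖g‖_{L²} with K depending only on c, C, r₂-r₁. -/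
/-!
Write `w'' = (g - V w) / Δ`, multiply by `w` and integrate: the Dirichlet conditions turn
`∫ w w''` into `-∫ (w')²`. Pointwise, `-V w² ≥ cλ² w²` dominates the cross term `g w` after
Young's inequality, and `c ≤ Δ ≤ C` lets one divide by `Δ`. This yields
`∫ (w')² + (cλ² / 2C) ∫ w² ≤ ∫ g² / (2c²λ²)`, from which both bounds follow.
-/

open Set intervalIntegral

theorem integral_mul_deriv2_eq_neg_integral_sq_deriv {w w' w'' : ℝ → ℝ} {a b : ℝ}
    (hw : ∀ x ∈ uIcc a b, HasDerivAt w (w' x) x) (hw' : ∀ x ∈ uIcc a b, HasDerivAt w' (w'' x) x)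
    (hw'' : IntervalIntegrable w'' MeasureTheory.volume a b) (ha : w a = 0) (hb : w b = 0) :
    ∫ x in a..b, w x * w'' x = -∫ x in a..b, w' x ^ 2 := by
  have hw'_int : IntervalIntegrable w' MeasureTheory.volume a b :=
    ContinuousOn.intervalIntegrable fun x hx => (hw' x hx).continuousAt.continuousWithinAt
  simp only [integral_mul_deriv_eq_deriv_mul hw hw' hw'_int hw'', ha, hb, sq]
  ring

theorem elliptic_pointwise_energy_le {c C a Δ V y y'' g : ℝ} (hc : 0 < c) (ha : 0 < a)
    (hV : V ≤ -a) (hcΔ : c ≤ Δ) (hΔC : Δ ≤ C) (heq : Δ * y'' + V * y = g) :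
    a / (2 * C) * y ^ 2 - y * y'' ≤ g ^ 2 / (2 * c * a) := by
  have hΔ : 0 < Δ := hc.trans_le hcΔ
  have hC : 0 < C := hΔ.trans_le hΔC
  have young : -(g * y) ≤ a / 2 * y ^ 2 + g ^ 2 / (2 * a) := by
    have := two_mul_le_add_sq (a * y) (-g)
    field_simp
    nlinarith
  have energy : Δ * (-(y * y'')) ≤ -(a / 2 * y ^ 2) + g ^ 2 / (2 * a) := by
    have : Δ * (-(y * y'')) = V * y ^ 2 - g * y := by rw [← heq]; ring
    nlinarith [mul_le_mul_of_nonneg_right hV (sq_nonneg y)]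
  have hleft : Δ * (a / (2 * C) * y ^ 2) ≤ a / 2 * y ^ 2 :=
    calc Δ * (a / (2 * C) * y ^ 2) ≤ C * (a / (2 * C) * y ^ 2) := by gcongr
      _ = a / 2 * y ^ 2 := by field_simp
  have hright : g ^ 2 / (2 * a) ≤ Δ * (g ^ 2 / (2 * c * a)) :=
    calc g ^ 2 / (2 * a) = c * (g ^ 2 / (2 * c * a)) := by field_simp
      _ ≤ Δ * (g ^ 2 / (2 * c * a)) := by gcongr
  refine le_of_mul_le_mul_left ?_ hΔ
  linarith

theorem elliptic_energy_estimate {c C a r₁ r₂ : ℝ} {V Δ w w' w'' g : ℝ → ℝ}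
    (hc : 0 < c) (ha : 0 < a) (hr : r₁ ≤ r₂)
    (hV : ∀ r ∈ Icc r₁ r₂, V r ≤ -a) (hΔ : ∀ r ∈ Icc r₁ r₂, c ≤ Δ r ∧ Δ r ≤ C)
    (hw : ∀ r ∈ Icc r₁ r₂, HasDerivAt w (w' r) r)
    (hw' : ∀ r ∈ Icc r₁ r₂, HasDerivAt w' (w'' r) r)
    (hw'' : ContinuousOn w'' (Icc r₁ r₂)) (hg : ContinuousOn g (Icc r₁ r₂))
    (heq : ∀ r ∈ Icc r₁ r₂, Δ r * w'' r + V r * w r = g r) (h₁ : w r₁ = 0) (h₂ : w r₂ = 0) :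
    (∫ s in r₁..r₂, w' s ^ 2) + a / (2 * C) * ∫ s in r₁..r₂, w s ^ 2
      ≤ (∫ s in r₁..r₂, g s ^ 2) / (2 * c * a) := by
  rw [← uIcc_of_le hr] at hw hw' hw'' hg
  have hw_cont : ContinuousOn w (uIcc r₁ r₂) :=
    fun r hr => (hw r hr).continuousAt.continuousWithinAt
  have hw_sq : IntervalIntegrable (fun s => w s ^ 2) MeasureTheory.volume r₁ r₂ :=
    (hw_cont.pow 2).intervalIntegrable
  have hww'' : IntervalIntegrable (fun s => w s * w'' s) MeasureTheory.volume r₁ r₂ :=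
    (hw_cont.mul hw'').intervalIntegrable
  have hibp := integral_mul_deriv2_eq_neg_integral_sq_deriv hw hw' hw''.intervalIntegrable h₁ h₂
  calc (∫ s in r₁..r₂, w' s ^ 2) + a / (2 * C) * ∫ s in r₁..r₂, w s ^ 2
      = ∫ s in r₁..r₂, (a / (2 * C) * w s ^ 2 - w s * w'' s) := by
        rw [integral_sub (hw_sq.const_mul _) hww'', integral_const_mul, hibp]; ring
    _ ≤ ∫ s in r₁..r₂, g s ^ 2 / (2 * c * a) :=
        integral_mono_on hr ((hw_sq.const_mul _).sub hww'')
          ((hg.pow 2).intervalIntegrable.div_const _) fun r hr =>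
            elliptic_pointwise_energy_le hc ha (hV r hr) (hΔ r hr).1 (hΔ r hr).2 (heq r hr)
    _ = (∫ s in r₁..r₂, g s ^ 2) / (2 * c * a) := integral_div _ _

theorem mul_sqrt_le_sqrt_mul_sqrt_of_sq_mul_le {x k M G : ℝ} (hx : 0 ≤ x) (hk : 0 ≤ k)
    (h : x ^ 2 * M ≤ k * G) : x * √M ≤ √k * √G := by
  rw [← Real.sqrt_sq hx, ← Real.sqrt_mul (sq_nonneg x), ← Real.sqrt_mul hk]
  exact Real.sqrt_le_sqrt h

/-- Case 3 (elliptic) estimate: if `Δ w'' + V w = g` with `V ≤ -cλ²` and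
Dirichlet boundary conditions, then `λ²‖w‖_{L²} + λ‖w'‖_{L²} ≤ K‖g‖_{L²}`. -/
theorem ode_elliptic_estimate (c C L : ℝ) (hc : 0 < c) (hcC : c ≤ C)
    (hL : 0 < L) :
    ∃ K > (0:ℝ), ∀ lam : ℝ, 1 ≤ lam → ∀ r₁ r₂ : ℝ, r₂ - r₁ = L →
      ∀ V Δ w w' w'' g : ℝ → ℝ,
      ContinuousOn V (Set.Icc r₁ r₂) →
      (∀ r ∈ Set.Icc r₁ r₂, V r ≤ -c * lam^2) →
      ContinuousOn Δ (Set.Icc r₁ r₂) →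
      (∀ r ∈ Set.Icc r₁ r₂, c ≤ Δ r ∧ Δ r ≤ C) →
      (∀ r ∈ Set.Icc r₁ r₂, HasDerivAt w (w' r) r) →
      (∀ r ∈ Set.Icc r₁ r₂, HasDerivAt w' (w'' r) r) →
      ContinuousOn w'' (Set.Icc r₁ r₂) →
      ContinuousOn g (Set.Icc r₁ r₂) →
      (∀ r ∈ Set.Icc r₁ r₂, Δ r * w'' r + V r * w r = g r) →
      w r₁ = 0 → w r₂ = 0 →
      lam^2 * Real.sqrt (∫ s in r₁..r₂, (w s)^2)
        + lam * Real.sqrt (∫ s in r₁..r₂, (w' s)^2)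
        ≤ K * Real.sqrt (∫ s in r₁..r₂, (g s)^2) := by
  have hC : 0 < C := hc.trans_le hcC
  refine ⟨√(C / c ^ 3) + √(1 / (2 * c ^ 2)), by positivity, ?_⟩
  intro lam hlam r₁ r₂ hL' V Δ w w' w'' g _ hV _ hΔ hw hw' hw'' hg heq h₁ h₂
  have hr : r₁ ≤ r₂ := by linarith
  have hlam : 0 < lam := by linarith
  have energy := elliptic_energy_estimate (a := c * lam ^ 2) hc (by positivity) hr
    (fun r hr => (hV r hr).trans_eq (neg_mul c _)) hΔ hw hw' hw'' hg heq h₁ h₂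
  set P := ∫ s in r₁..r₂, w' s ^ 2
  set M := ∫ s in r₁..r₂, w s ^ 2
  set G := ∫ s in r₁..r₂, g s ^ 2
  have hM : 0 ≤ M := integral_nonneg hr fun s _ => sq_nonneg (w s)
  have hP : 0 ≤ P := integral_nonneg hr fun s _ => sq_nonneg (w' s)
  have hM_le : (lam ^ 2) ^ 2 * M ≤ C / c ^ 3 * G := by
    have : c * lam ^ 2 / (2 * C) * M ≤ G / (2 * c * (c * lam ^ 2)) := by linarith
    field_simp at this ⊢
    nlinarith
  have hP_le : lam ^ 2 * P ≤ 1 / (2 * c ^ 2) * G := by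
    have : P ≤ G / (2 * c * (c * lam ^ 2)) := by
      linarith [mul_nonneg (by positivity : 0 ≤ c * lam ^ 2 / (2 * C)) hM]
    field_simp at this ⊢
    nlinarith
  rw [add_mul]
  exact add_le_add (mul_sqrt_le_sqrt_mul_sqrt_of_sq_mul_le (by positivity) (by positivity) hM_le)
    (mul_sqrt_le_sqrt_mul_sqrt_of_sq_mul_le hlam.le (by positivity) hP_le)
end

section
/- Let μ ≥ 1, 1 ≤ ν ≤ μ, and suppose a kernel K on ℝ³ × ℝ³ (variables (t,r,ω) with ω ∈ ℝ, schematically) satisfies |K(t₁,r₁,ω₁,t₂,r₂,ω₂)| ≤ ln(2 + μ/ν)·μ^{ρ₁-ρ₂}·ν(|r₁-r₂|ν+1)^{-N}·μ²(|ω₁-ω₂|μ+1)^{-N}·(|t₁-t₂|μ+1)^{-N} for N = 10. If ρ₂ - ρ₁ > 0, 1/p₁ - 1/p₂ ∈ (0,1), 1/q₁ - 1/q₂ ∈ (0,1), and 3/q₂ + ρ₂ = 3/q₁ + ρ₁, then summing over dyadic μ ≥ 1 and 1 ≤ ν ≤ μ (dyadic) yields the bound Σ_{μ,ν} sup|K_{μν}|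 ≤ C·|t₁-t₂|^{-1+1/p₁-1/p₂}·|r₁-r₂|^{-1+1/q₁-1/q₂}·|ω₁-ω₂|^{-2(1-1/q₁+1/q₂)} pointwise for t₁≠t₂, r₁≠r₂, ω₁≠ω₂. -/
/-!
With `α = 1/q₁ - 1/q₂` and `β = 1/p₁ - 1/p₂` the scaling relation gives `ρ₁ - ρ₂ = -3α`.
Trading each factor `(x μ + 1)^{-N}` for `x^{-θ} μ^{-θ}` (`θ = 1 - α, 2 - 2α, 1 - β`) turns the
`(μ, ν)` term into `ln(2 + μ/ν) (μ/ν)^{-α} · μ^{-(1-β)}` times the claimed power of the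
distances. With `μ = 2^k`, `ν = 2^j`, the inner sum over `j ≤ k` is bounded by the convergent
series `∑ₘ ln(2 + 2^m) 2^{-αm}` and the outer sum by the geometric series `∑ₖ 2^{-(1-β)k}`.
-/

open Real Finset

theorem mul_add_one_rpow_neg_le {x μ θ N : ℝ} (hx : 0 < x) (hμ : 0 < μ) (hθ : 0 ≤ θ)
    (hθN : θ ≤ N) : (x * μ + 1) ^ (-N) ≤ x ^ (-θ) * μ ^ (-θ) := by
  have hxμ : 0 < x * μ := mul_pos hx hμ
  calc (x * μ + 1) ^ (-N) ≤ (x * μ + 1) ^ (-θ) :=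
        rpow_le_rpow_of_exponent_le (by linarith) (by linarith)
    _ ≤ (x * μ) ^ (-θ) := rpow_le_rpow_of_nonpos hxμ (by linarith) (by linarith)
    _ = x ^ (-θ) * μ ^ (-θ) := mul_rpow hx.le hμ.le

theorem kernel_bound_le {a b c α β μ ν N : ℝ} (ha : 0 < a) (hb : 0 < b) (hc : 0 < c)
    (hμ : 0 < μ) (hν : 0 < ν) (hα : α ∈ Set.Icc (0 : ℝ) 1) (hβ : β ∈ Set.Icc (0 : ℝ) 1)
    (hN : 2 ≤ N) :
    log (2 + μ / ν) * μ ^ (-(3 * α)) * ν * (b * ν + 1) ^ (-N) * μ ^ 2 * (c * μ + 1) ^ (-N) *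
        (a * μ + 1) ^ (-N)
      ≤ log (2 + μ / ν) * (μ / ν) ^ (-α) *
        (μ ^ (-(1 - β)) * (a ^ (-(1 - β)) * b ^ (-(1 - α)) * c ^ (-(2 - 2 * α)))) := by
  obtain ⟨hα0, hα1⟩ := hα
  obtain ⟨hβ0, hβ1⟩ := hβ
  have hlog : 0 ≤ log (2 + μ / ν) := log_nonneg (by have := div_pos hμ hν; linarith)
  have hν_pow : ν ^ α = ν * ν ^ (-(1 - α)) := by
    have := rpow_add hν 1 (-(1 - α))
    rw [rpow_one] at this
    rw [← this]; ring_nf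
  have hμ_pow : μ ^ (-α) = μ ^ (-(3 * α)) * μ ^ 2 * μ ^ (-(2 - 2 * α)) := by
    rw [← rpow_natCast, ← rpow_add hμ, ← rpow_add hμ]; push_cast; ring_nf
  calc _ ≤ log (2 + μ / ν) * μ ^ (-(3 * α)) * ν * (b ^ (-(1 - α)) * ν ^ (-(1 - α))) * μ ^ 2 *
        (c ^ (-(2 - 2 * α)) * μ ^ (-(2 - 2 * α))) * (a ^ (-(1 - β)) * μ ^ (-(1 - β))) := by
        gcongr
        · exact mul_add_one_rpow_neg_le hb hν (by linarith) (by linarith)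
        · exact mul_add_one_rpow_neg_le hc hμ (by linarith) (by linarith)
        · exact mul_add_one_rpow_neg_le ha hμ (by linarith) (by linarith)
    _ = _ := by
        rw [div_rpow hμ.le hν.le, rpow_neg hν.le α, div_inv_eq_mul, hν_pow, hμ_pow]
        ring

theorem summable_two_pow_rpow_neg {x : ℝ} (hx : 0 < x) :
    Summable fun k : ℕ => ((2 : ℝ) ^ k) ^ (-x) := by
  simp_rw [← rpow_pow_comm zero_le_two]
  exact summable_geometric_of_lt_one (by positivity)
    (rpow_lt_one_of_one_lt_of_neg one_lt_two (by linarith))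

theorem log_two_add_two_pow_le (m : ℕ) : log (2 + 2 ^ m) ≤ (m + 2) * log 2 := by
  have h1 : (1 : ℝ) ≤ 2 ^ m := one_le_pow₀ one_le_two
  calc log (2 + 2 ^ m) ≤ log (2 ^ (m + 2)) :=
        log_le_log (by positivity) (by rw [pow_add]; linarith)
    _ = (m + 2) * log 2 := by rw [log_pow]; push_cast; ring

theorem summable_log_two_add_two_pow_mul_rpow_neg {x : ℝ} (hx : 0 < x) :
    Summable fun m : ℕ => log (2 + 2 ^ m) * ((2 : ℝ) ^ m) ^ (-x) := by
  have hr : ‖(2 : ℝ) ^ (-x)‖ < 1 := by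
    rw [norm_of_nonneg (by positivity)]
    exact rpow_lt_one_of_one_lt_of_neg one_lt_two (by linarith)
  have hlin : Summable fun m : ℕ => ((m : ℝ) + 2) * log 2 * ((2 : ℝ) ^ m) ^ (-x) := by
    simp_rw [← rpow_pow_comm zero_le_two]
    have := ((summable_pow_mul_geometric_of_norm_lt_one 1 hr).add
      ((summable_geometric_of_norm_lt_one hr).mul_left 2)).mul_left (log 2)
    exact this.congr fun m => by simp only [pow_one]; ring
  refine hlin.of_nonneg_of_le (fun m => mul_nonneg ?_ (by positivity)) fun m =>
    mul_le_mul_of_nonneg_right (log_two_add_two_pow_le m) (by positivity)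
  exact log_nonneg (one_le_two.trans (le_add_of_nonneg_right (pow_nonneg zero_le_two m)))

theorem tsum_sum_range_le_mul_tsum {F : ℕ → ℕ → ℝ} {f g : ℕ → ℝ} (hf0 : ∀ m, 0 ≤ f m)
    (hg0 : ∀ k, 0 ≤ g k) (hf : Summable f) (hg : Summable g)
    (hF : ∀ k, ∀ j ≤ k, F k j ≤ f (k - j) * g k) :
    ∑' k, ∑ j ∈ range (k + 1), F k j ≤ (∑' m, f m) * ∑' k, g k := by
  have inner (k : ℕ) : ∑ j ∈ range (k + 1), F k j ≤ (∑' m, f m) * g k :=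
    calc _ ≤ ∑ j ∈ range (k + 1), f (k - j) * g k :=
          sum_le_sum fun j hj => hF k j (Nat.lt_succ_iff.mp (mem_range.mp hj))
      _ = (∑ m ∈ range (k + 1), f m) * g k := by
          rw [← sum_mul, ← sum_range_reflect f (k + 1), Nat.add_sub_cancel]
      _ ≤ _ := mul_le_mul_of_nonneg_right (hf.sum_le_tsum _ fun m _ => hf0 m) (hg0 k)
  refine tsum_le_of_sum_le' (mul_nonneg (tsum_nonneg hf0) (tsum_nonneg hg0)) fun u => ?_
  calc _ ≤ ∑ k ∈ u, (∑' m, f m) * g k := sum_le_sum fun k _ => inner k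
    _ = (∑' m, f m) * ∑ k ∈ u, g k := (mul_sum _ _ _).symm
    _ ≤ _ := mul_le_mul_of_nonneg_left (hg.sum_le_tsum _ fun k _ => hg0 k) (tsum_nonneg hf0)

theorem dyadic_kernel_summation_general (ρ₁ ρ₂ p₁ p₂ q₁ q₂ : ℝ)
    (hp : 0 < 1/p₁ - 1/p₂) (hp' : 1/p₁ - 1/p₂ < 1)
    (hq : 0 < 1/q₁ - 1/q₂) (hq' : 1/q₁ - 1/q₂ < 1)
    (hscale : 3/q₂ + ρ₂ = 3/q₁ + ρ₁) :
    ∃ C > (0:ℝ), ∀ t₁ t₂ r₁ r₂ ω₁ ω₂ : ℝ, t₁ ≠ t₂ → r₁ ≠ r₂ → ω₁ ≠ ω₂ →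
      (∑' k : ℕ, ∑ j ∈ Finset.range (k+1),
        Real.log (2 + (2:ℝ)^k / (2:ℝ)^j) * ((2:ℝ)^k) ^ (ρ₁ - ρ₂) *
          ((2:ℝ)^j) * (|r₁ - r₂| * (2:ℝ)^j + 1) ^ (-(10:ℝ)) *
          ((2:ℝ)^k)^2 * (|ω₁ - ω₂| * (2:ℝ)^k + 1) ^ (-(10:ℝ)) *
          (|t₁ - t₂| * (2:ℝ)^k + 1) ^ (-(10:ℝ)))
      ≤ C * |t₁ - t₂| ^ (-1 + 1/p₁ - 1/p₂) * |r₁ - r₂| ^ (-1 + 1/q₁ - 1/q₂) *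
          |ω₁ - ω₂| ^ (-2 * (1 - 1/q₁ + 1/q₂)) := by
  set α := 1/q₁ - 1/q₂
  set β := 1/p₁ - 1/p₂
  have hρα : ρ₁ - ρ₂ = -(3 * α) := by linear_combination -hscale
  set f : ℕ → ℝ := fun m => log (2 + 2 ^ m) * ((2 : ℝ) ^ m) ^ (-α)
  set g : ℕ → ℝ := fun k => ((2 : ℝ) ^ k) ^ (-(1 - β))
  have hf : Summable f := summable_log_two_add_two_pow_mul_rpow_neg hq
  have hg : Summable g := summable_two_pow_rpow_neg (by linarith)
  have hf0 (m : ℕ) : 0 ≤ f m := mul_nonneg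
    (log_nonneg (one_le_two.trans (le_add_of_nonneg_right (by positivity)))) (by positivity)
  have hg0 (k : ℕ) : 0 ≤ g k := by positivity
  have hf_pos : 0 < ∑' m, f m := hf.tsum_pos hf0 0 (by simpa [f] using log_pos (by norm_num))
  refine ⟨(∑' m, f m) * ∑' k, g k, mul_pos hf_pos (hg.tsum_pos hg0 0 (by simp [g])), ?_⟩
  intro t₁ t₂ r₁ r₂ ω₁ ω₂ ht hr hω
  have ha : 0 < |t₁ - t₂| := abs_pos.2 (sub_ne_zero.2 ht)
  have hb : 0 < |r₁ - r₂| := abs_pos.2 (sub_ne_zero.2 hr)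
  have hc : 0 < |ω₁ - ω₂| := abs_pos.2 (sub_ne_zero.2 hω)
  set A := |t₁ - t₂| ^ (-(1 - β)) * |r₁ - r₂| ^ (-(1 - α)) * |ω₁ - ω₂| ^ (-(2 - 2 * α))
  have hA : 0 ≤ A := by positivity
  calc _ ≤ (∑' m, f m) * ∑' k, g k * A := by
        refine tsum_sum_range_le_mul_tsum hf0 (fun k => mul_nonneg (hg0 k) hA) hf
          (hg.mul_right A) fun k j hjk => ?_
        have hkj : (2 : ℝ) ^ (k - j) = 2 ^ k / 2 ^ j := by
          rw [pow_sub₀ _ two_ne_zero hjk, div_eq_mul_inv]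
        rw [hρα]
        refine (kernel_bound_le ha hb hc (by positivity) (by positivity) ⟨hq.le, hq'.le⟩
          ⟨hp.le, hp'.le⟩ (by norm_num)).trans_eq ?_
        simp only [f, g, hkj]; ring
    _ = _ := by
        rw [tsum_mul_right, show -1 + 1/p₁ - 1/p₂ = -(1 - β) by ring,
          show -1 + 1/q₁ - 1/q₂ = -(1 - α) by ring,
          show -2 * (1 - 1/q₁ + 1/q₂) = -(2 - 2 * α) by ring]
        ring

/-- Dyadic summation of the kernel bounds: summing the localized kernel bounds
over dyadic `μ = 2^k ≥ 1` and dyadic `1 ≤ ν = 2^j ≤ μ` yields the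
Hardy–Littlewood–Sobolev-type kernel bound. -/
theorem dyadic_kernel_summation (ρ₁ ρ₂ p₁ p₂ q₁ q₂ : ℝ)
    (hρ : 0 < ρ₂ - ρ₁)
    (hp : 0 < 1/p₁ - 1/p₂) (hp' : 1/p₁ - 1/p₂ < 1)
    (hq : 0 < 1/q₁ - 1/q₂) (hq' : 1/q₁ - 1/q₂ < 1)
    (hscale : 3/q₂ + ρ₂ = 3/q₁ + ρ₁) :
    ∃ C > (0:ℝ), ∀ t₁ t₂ r₁ r₂ ω₁ ω₂ : ℝ, t₁ ≠ t₂ → r₁ ≠ r₂ → ω₁ ≠ ω₂ →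
      (∑' k : ℕ, ∑ j ∈ Finset.range (k+1),
        Real.log (2 + (2:ℝ)^k / (2:ℝ)^j) * ((2:ℝ)^k) ^ (ρ₁ - ρ₂) *
          ((2:ℝ)^j) * (|r₁ - r₂| * (2:ℝ)^j + 1) ^ (-(10:ℝ)) *
          ((2:ℝ)^k)^2 * (|ω₁ - ω₂| * (2:ℝ)^k + 1) ^ (-(10:ℝ)) *
          (|t₁ - t₂| * (2:ℝ)^k + 1) ^ (-(10:ℝ)))
      ≤ C * |t₁ - t₂| ^ (-1 + 1/p₁ - 1/p₂) * |r₁ - r₂| ^ (-1 + 1/q₁ - 1/q₂) *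
          |ω₁ - ω₂| ^ (-2 * (1 - 1/q₁ + 1/q₂)) :=
  dyadic_kernel_summation_general ρ₁ ρ₂ p₁ p₂ q₁ q₂ hp hp' hq hq' hscale
end
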